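/- arXiv:2205.11466 — 2 statements merged into one kernel-verified Lean document; each statement's English description precedes it below -/
import Mathlib

section
/- Let ⟪·,·⟫ be a symmetric bilinear form on MvPolynomial (Fin 2) ℝ that is positive definite on the subspace of binary forms of degree 2d, with ‖q‖² = ⟪q,q⟫. Let u₁, u₂ be binary forms of degree d and let p be any binary form of degree 2d. Suppose: (gradient) ⟪u₁v₁ + u₂v₂, u₁² + u₂² − p⟫ = 0 for all binary forms v₁, v₂ of degree d; and (Hessian) ⟪v₁² + v₂², u₁² + u₂² − p⟫ + 2‖u₁v₁ + u₂v₂‖² ≥ 0 for all binary forms v₁, v₂ of degree d. Then for every binary form q of degree 2d that is a sum of squares of binary forms of degree d, ‖u₁² + u₂² − p‖² ≤ ‖q − p‖²; that is, u₁² + u₂² is the projection of p onto the cone of sums of squares with respect to the norm induced by ⟪·,·⟫. -/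
/-!
Write `r = u₁² + u₂² - p` and `ℓ = ⟪·, r⟫`. The gradient condition at `v = u` gives
`ℓ (u₁² + u₂²) = 0`, so `‖q - p‖² = ‖q - (u₁² + u₂²)‖² + 2 ℓ q + ‖r‖²`, and it suffices to show
`ℓ (t²) ≥ 0` for every form `t` of degree `d`.

After a shear of the coordinates `u₁` does not vanish at infinity, and we dehomogenize:
`u₁ = g h₁`, `u₂ = g h₂` with `g` their gcd, `h₁, h₂` coprime, and `H = h₁² + h₂²`. The gradient
condition makes `ℓ` vanish on the multiples of `g` of degree `≤ 2d`. The Hessian along the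
directions `(-h₂ s, h₁ s)`, which do not move `u₁ v₁ + u₂ v₂`, gives `ℓ (H s²) ≥ 0` when
`deg s ≤ deg g`, and when `ℓ (H s²) = 0` it gives `ℓ (s w) = 0` for all `w`; then, if `ℓ` vanishes
on the multiples of `γ`, it also vanishes on those of `gcd γ s`. Take `γ ∣ g` of minimal degree on
whose multiples `ℓ` vanishes. A square factor of `γ`, a root of `γ` where `H` vanishes, or a factor
`(X - b)² + μ` of `γ` would each produce an `s ≠ 0` with `deg s < deg γ` and `ℓ (H s²) = 0`. So `γ`
is squarefree with only real roots, at which `H > 0`, and interpolating `t / √H` at these roots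
gives `s` with `t² ≡ H s² mod γ`, whence `ℓ (t²) = ℓ (H s²) ≥ 0`.
-/

open Polynomial

lemma nonneg_of_forall_mul_sq_add_nonneg {a c : ℝ} (h : ∀ t : ℝ, 0 ≤ a * t ^ 2 + c) : 0 ≤ a := by
  by_contra! ha
  have key := h √((|c| + 1) / -a)
  rw [Real.sq_sqrt (div_nonneg (by positivity) (neg_nonneg.2 ha.le)),
    mul_div_assoc', div_neg, mul_div_cancel_left₀ _ ha.ne] at key
  linarith [le_abs_self c]

lemma eq_zero_of_forall_mul_add_nonneg {b c : ℝ} (h : ∀ t : ℝ, 0 ≤ b * t + c) : b = 0 := by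
  by_contra hb
  have key := h (-(|c| + 1) / b)
  rw [mul_div_cancel₀ _ hb] at key
  linarith [le_abs_self c]

lemma LinearMap.apply_sub_le_apply_sub_of_nonneg {M : Type*} [AddCommGroup M] [Module ℝ M]
    (B : M →ₗ[ℝ] M →ₗ[ℝ] ℝ) (hB : ∀ x y, B x y = B y x) {U p q : M} (hU : B U (U - p) = 0)
    (hq : 0 ≤ B q (U - p)) (hqU : 0 ≤ B (q - U) (q - U)) :
    B (U - p) (U - p) ≤ B (q - p) (q - p) := by
  have hcross : B (q - U) (U - p) = B q (U - p) := by
    rw [LinearMap.map_sub₂, hU, sub_zero]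
  rw [show q - p = (q - U) + (U - p) by abel, LinearMap.map_add₂, map_add, map_add,
    hB (U - p) (q - U), hcross]
  linarith

section Bezout

variable {K : Type*} [Field K] {p q : K[X]}

theorem IsCoprime.exists_eq_mul_add_mul_degree_lt (hpq : IsCoprime p q) (hp : p ≠ 0) (F : K[X]) :
    ∃ A B : K[X], F = A * p + B * q ∧ B.degree < p.degree := by
  obtain ⟨a, b, hab⟩ := hpq
  refine ⟨F * a + F * b / p * q, F * b % p, ?_, degree_mod_lt _ hp⟩
  linear_combination (-F) * hab - q * EuclideanDomain.div_add_mod (F * b) p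

theorem IsCoprime.exists_eq_mul_add_mul_natDegree_le (hpq : IsCoprime p q) (hp : p ≠ 0) {n : ℕ}
    (hpn : p.natDegree ≤ n) (hqn : q.natDegree ≤ n) {F : K[X]}
    (hF : F.natDegree ≤ n + p.natDegree) :
    ∃ A B : K[X], F = A * p + B * q ∧ A.natDegree ≤ n ∧ B.natDegree ≤ n := by
  obtain ⟨A, B, rfl, hB⟩ := hpq.exists_eq_mul_add_mul_degree_lt hp F
  have hBp : B = 0 ∨ B.natDegree < p.natDegree := by
    rcases eq_or_ne B 0 with hB0 | hB0
    · exact .inl hB0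
    · exact .inr (natDegree_lt_natDegree hB0 hB)
  have hBq : (B * q).natDegree ≤ n + p.natDegree := by
    rcases hBp with rfl | hBp
    · simp
    · have := natDegree_mul_le (p := B) (q := q)
      omega
  refine ⟨A, B, rfl, ?_, ?_⟩
  swap
  · rcases hBp with rfl | hBp
    · simp
    · omega
  rcases eq_or_ne A 0 with rfl | hA0
  · simp
  have hAp : (A * p).natDegree ≤ n + p.natDegree := by
    rw [show A * p = (A * p + B * q) - B * q by ring]
    exact (natDegree_sub_le _ _).trans (max_le hF hBq)
  rw [natDegree_mul hA0 hp] at hAp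
  omega

theorem exists_eq_mul_add_mul_degree_lt_of_gcd_dvd [DecidableEq K] (hp : p ≠ 0) {F : K[X]}
    (hF : gcd p q ∣ F) : ∃ A B : K[X], F = A * p + B * q ∧ B.degree < p.degree := by
  have hδ : gcd p q ≠ 0 := gcd_ne_zero_of_left hp
  obtain ⟨G, rfl⟩ := hF
  obtain ⟨A, B, rfl, hB⟩ := (isCoprime_div_gcd_div_gcd_of_gcd_ne_zero hδ)
    |>.exists_eq_mul_add_mul_degree_lt (left_div_gcd_ne_zero hp) G
  refine ⟨A, B, ?_, hB.trans_le (degree_div_le _ _)⟩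
  linear_combination A * EuclideanDomain.mul_div_cancel' hδ (gcd_dvd_left p q) +
    B * EuclideanDomain.mul_div_cancel' hδ (gcd_dvd_right p q)

end Bezout

theorem Squarefree.dvd_of_forall_isRoot {γ F : ℝ[X]} (hγ : Squarefree γ)
    (hreal : ∀ z : ℂ, aeval z γ = 0 → z.im = 0) (hF : ∀ x, γ.IsRoot x → F.IsRoot x) :
    γ ∣ F := by
  rcases eq_or_ne F 0 with rfl | hF0
  · exact dvd_zero γ
  have hinj := (algebraMap ℝ ℂ).injective
  rw [← map_dvd_map' (algebraMap ℝ ℂ)]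
  refine (IsAlgClosed.splits _).dvd_of_roots_le_roots
    ((Polynomial.map_ne_zero_iff hinj).2 hγ.ne_zero) ?_
  have hnodup : (γ.map (algebraMap ℝ ℂ)).roots.Nodup :=
    nodup_roots (PerfectField.separable_iff_squarefree.2 hγ).map
  refine (Multiset.le_iff_subset hnodup).2 fun z hz => ?_
  rw [mem_roots_map_of_injective hinj hγ.ne_zero] at hz
  rw [mem_roots_map_of_injective hinj hF0]
  have hzre : z = algebraMap ℝ ℂ z.re := Complex.ext rfl (by simpa using hreal z hz)
  rw [hzre, eval₂_hom] at hz ⊢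
  rw [(hF z.re (by simpa using hz)).eq_zero, map_zero]

theorem Squarefree.exists_dvd_sq_sub_mul_sq {γ H : ℝ[X]} (hγ : Squarefree γ)
    (hreal : ∀ z : ℂ, aeval z γ = 0 → z.im = 0) (hH : ∀ x, γ.IsRoot x → 0 < H.eval x)
    (T : ℝ[X]) : ∃ s : ℝ[X], s.degree < γ.degree ∧ γ ∣ T ^ 2 - H * s ^ 2 := by
  classical
  set R := γ.roots.toFinset
  have hinj : Set.InjOn id (R : Set ℝ) := Function.injective_id.injOn
  refine ⟨Lagrange.interpolate R id (fun x => T.eval x / √(H.eval x)), ?_, ?_⟩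
  · refine (Lagrange.degree_interpolate_lt _ hinj).trans_le ?_
    rw [degree_eq_natDegree hγ.ne_zero, Nat.cast_le]
    exact (Multiset.toFinset_card_le _).trans (card_roots' γ)
  · refine hγ.dvd_of_forall_isRoot hreal fun x hx => ?_
    have hnode := Lagrange.eval_interpolate_at_node (fun x => T.eval x / √(H.eval x)) hinj
      (Multiset.mem_toFinset.2 ((mem_roots hγ.ne_zero).2 hx))
    rw [id] at hnode
    have hHx := hH x hx
    simp only [IsRoot, eval_sub, eval_pow, eval_mul, hnode, div_pow, Real.sq_sqrt hHx.le]
    field_simp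
    ring

theorem sq_add_C_dvd_of_aeval_eq_zero {γ : ℝ[X]} {z : ℂ} (h : aeval z γ = 0) (hz : z.im ≠ 0) :
    (X - C z.re) ^ 2 + C (z.im ^ 2) ∣ γ := by
  convert γ.quadratic_dvd_of_aeval_eq_zero_im_ne_zero h hz using 1
  rw [Complex.sq_norm, Complex.normSq_apply]
  simp only [map_add, map_mul, map_pow, map_ofNat]
  ring

theorem squarefree_of_forall_not_dvd_mul_sq {γ H : ℝ[X]} (hγ0 : γ ≠ 0)
    (h : ∀ s, s ≠ 0 → s.natDegree < γ.natDegree → ¬ γ ∣ H * s ^ 2) : Squarefree γ := by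
  intro π ⟨τ, hτ⟩
  by_contra hπ
  have hs0 : π * τ ≠ 0 := by rintro h; rw [mul_assoc, h, mul_zero] at hτ; exact hγ0 hτ
  have hπ0 : π ≠ 0 := left_ne_zero_of_mul hs0
  have hlt : (π * τ).natDegree < γ.natDegree := by
    rw [hτ, mul_assoc, natDegree_mul hπ0 hs0]
    have := natDegree_pos_iff_degree_pos.2 (degree_pos_of_ne_zero_of_nonunit hπ0 hπ)
    omega
  exact h _ hs0 hlt ⟨H * τ, by rw [hτ]; ring⟩

theorem eval_sq_add_sq_pos_of_forall_not_dvd {γ h₁ h₂ : ℝ[X]} (hγ0 : γ ≠ 0)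
    (h : ∀ s, s ≠ 0 → s.natDegree < γ.natDegree → ¬ γ ∣ (h₁ ^ 2 + h₂ ^ 2) * s ^ 2) {x : ℝ}
    (hx : γ.IsRoot x) : 0 < (h₁ ^ 2 + h₂ ^ 2).eval x := by
  refine (by simp only [eval_add, eval_pow]; positivity : (0 : ℝ) ≤ _).lt_of_ne' fun hH => ?_
  obtain ⟨K, hK⟩ := dvd_iff_isRoot.2 hH
  obtain ⟨s, hs⟩ := dvd_iff_isRoot.2 hx
  have hs0 : s ≠ 0 := by rintro rfl; rw [mul_zero] at hs; exact hγ0 hs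
  have hlt : s.natDegree < γ.natDegree := by
    rw [hs, natDegree_mul (X_sub_C_ne_zero x) hs0, natDegree_X_sub_C]
    omega
  exact h s hs0 hlt ⟨K * s, by rw [hK, hs]; ring⟩

namespace Polynomial

lemma mem_degreeLE_of_natDegree_le {R : Type*} [Semiring R] {p : R[X]} {n : ℕ}
    (h : p.natDegree ≤ n) : p ∈ degreeLE R n :=
  mem_degreeLE.2 (degree_le_of_natDegree_le h)

variable {R : Type*} [CommRing R]

lemma homogenize_mul_two_mul {P Q : R[X]} {d : ℕ} (hP : P.natDegree ≤ d)
    (hQ : Q.natDegree ≤ d) : (P * Q).homogenize (2 * d) = P.homogenize d * Q.homogenize d := by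
  rw [two_mul]
  exact homogenize_mul P Q hP hQ

lemma eval_one_zero_homogenize {p : R[X]} {n : ℕ} (hp : p.natDegree ≤ n) :
    MvPolynomial.eval ![1, 0] (p.homogenize n) = p.coeff n := by
  refine induction_with_natDegree_le (fun p => MvPolynomial.eval ![1, 0] (p.homogenize n) =
    p.coeff n) n (by simp) (fun k c _ hk => ?_) (fun p q _ _ hp hq => by simp [hp, hq]) p hp
  rcases hk.lt_or_eq with h | rfl
  · simp [homogenize_X_pow hk, h.ne', Nat.sub_ne_zero_of_lt h]
  · simp

end Polynomial

namespace MvPolynomial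

variable {R : Type*} [CommRing R]

/-- The substitution `(x, y) ↦ (s x + y, x)`, a shear followed by a swap. The value of `shear s u`
at the point at infinity `(1, 0)` is `u (s, 1)`; for a suitable `s` this is nonzero, and then the
dehomogenization of `shear s u` keeps the full degree. -/
noncomputable def shear (s : R) : MvPolynomial (Fin 2) R ≃ₐ[R] MvPolynomial (Fin 2) R :=
  AlgEquiv.ofAlgHom (aeval ![C s * X 0 + X 1, X 0]) (aeval ![X 1, X 0 - C s * X 1])
    (by ext i : 1; fin_cases i <;> simp) (by ext i : 1; fin_cases i <;> simp)

lemma shear_apply (s : R) (u : MvPolynomial (Fin 2) R) :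
    shear s u = aeval ![C s * X 0 + X 1, X 0] u := rfl

lemma isHomogeneous_shear {s : R} {u : MvPolynomial (Fin 2) R} {n : ℕ}
    (hu : u.IsHomogeneous n) : (shear s u).IsHomogeneous n := by
  have := hu.aeval (![C s * X 0 + X 1, X 0] : Fin 2 → MvPolynomial (Fin 2) R) (n := 1) fun i => by
    fin_cases i
    · exact ((isHomogeneous_X _ _).C_mul _).add (isHomogeneous_X _ _)
    · exact isHomogeneous_X _ _
  rw [one_mul] at this
  exact this

lemma isHomogeneous_shear_symm {s : R} {u : MvPolynomial (Fin 2) R} {n : ℕ}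
    (hu : u.IsHomogeneous n) : ((shear s).symm u).IsHomogeneous n := by
  have := hu.aeval (![X 1, X 0 - C s * X 1] : Fin 2 → MvPolynomial (Fin 2) R) (n := 1) fun i => by
    fin_cases i
    · exact isHomogeneous_X _ _
    · exact (isHomogeneous_X _ _).sub ((isHomogeneous_X _ _).C_mul _)
  rw [one_mul] at this
  exact this

lemma eval_shear (s : R) (u : MvPolynomial (Fin 2) R) :
    eval ![1, 0] (shear s u) = eval ![s, 1] u := by
  induction u using MvPolynomial.induction_on with
  | C a => simp [shear_apply]
  | add p q hp hq => simp [hp, hq]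
  | mul_X p i hp => fin_cases i <;> simp_all [shear_apply]

lemma natDegree_aeval_X_one_le {w : MvPolynomial (Fin 2) R} {n : ℕ} (hw : w.IsHomogeneous n) :
    (aeval ![(Polynomial.X : R[X]), 1] w).natDegree ≤ n := by
  rw [w.as_sum, map_sum]
  refine natDegree_sum_le_of_forall_le _ _ fun m hm => ?_
  have := (Finsupp.le_weight 1 (s := 0) one_ne_zero m).trans_eq (hw (mem_support_iff.1 hm))
  rw [aeval_monomial, Finsupp.prod_fintype _ _ (by simp), Fin.prod_univ_two]
  simp only [Matrix.cons_val_zero, Matrix.cons_val_one, one_pow, mul_one]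
  exact (natDegree_C_mul_X_pow_le _ _).trans (by omega)

lemma coeff_aeval_X_one {w : MvPolynomial (Fin 2) R} {n : ℕ} (hw : w.IsHomogeneous n) :
    (aeval ![(Polynomial.X : R[X]), 1] w).coeff n = eval ![1, 0] w := by
  conv_rhs => rw [← homogenize_eq_of_isHomogeneous hw rfl]
  exact (eval_one_zero_homogenize (natDegree_aeval_X_one_le hw)).symm

lemma eval_aeval_X_one (x : R) (w : MvPolynomial (Fin 2) R) :
    (aeval ![(Polynomial.X : R[X]), 1] w).eval x = eval ![x, 1] w := by
  rw [← Polynomial.coe_aeval_eq_eval, comp_aeval_apply, ← MvPolynomial.coe_aeval_eq_eval]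
  have : (fun i => Polynomial.aeval x (![(Polynomial.X : R[X]), 1] i)) = ![x, 1] := by
    funext i
    fin_cases i <;> simp
  rw [this]
  rfl

lemma exists_degree_aeval_shear_eq {K : Type*} [Field K] [Infinite K]
    {u : MvPolynomial (Fin 2) K} {n : ℕ} (hu : u.IsHomogeneous n) (hu0 : u ≠ 0) :
    ∃ s : K, (aeval ![(Polynomial.X : K[X]), 1] (shear s u)).degree = n := by
  have hQ : aeval ![(Polynomial.X : K[X]), 1] u ≠ 0 := fun h =>
    hu0 (by rw [← homogenize_eq_of_isHomogeneous hu rfl, h, homogenize_zero])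
  obtain ⟨s, hs⟩ : ∃ s, (aeval ![(Polynomial.X : K[X]), 1] u).eval s ≠ 0 := by
    by_contra! h
    exact hQ (Polynomial.funext (by simpa using h))
  refine ⟨s, degree_eq_of_le_of_coeff_ne_zero
    (degree_le_of_natDegree_le (natDegree_aeval_X_one_le (isHomogeneous_shear hu))) ?_⟩
  rwa [coeff_aeval_X_one (isHomogeneous_shear hu), eval_shear, ← eval_aeval_X_one]

end MvPolynomial

/-- With `ℓ = ⟪·, u₁² + u₂² - p⟫` and `N m = 2 ‖m‖²` these are, up to positive factors, the first-
and second-order optimality conditions of `(u₁, u₂) ↦ ‖u₁² + u₂² - p‖²` over `V × V`. -/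
structure SecondOrderCritical {A : Type*} [CommRing A] [Algebra ℝ A] (V : Submodule ℝ A)
    (ℓ : A →ₗ[ℝ] ℝ) (N : A → ℝ) (u₁ u₂ : A) : Prop where
  grad : ∀ v₁ ∈ V, ∀ v₂ ∈ V, ℓ (u₁ * v₁ + u₂ * v₂) = 0
  hess : ∀ v₁ ∈ V, ∀ v₂ ∈ V, 0 ≤ ℓ (v₁ ^ 2 + v₂ ^ 2) + N (u₁ * v₁ + u₂ * v₂)

def VanishesOnMultiples (L : ℝ[X] →ₗ[ℝ] ℝ) (n : ℕ) (γ : ℝ[X]) : Prop :=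
  ∀ P : ℝ[X], P.natDegree ≤ n → γ ∣ P → L P = 0

structure FactoredCritical (L : ℝ[X] →ₗ[ℝ] ℝ) (N : ℝ[X] → ℝ) (d : ℕ) (g h₁ h₂ : ℝ[X]) :
    Prop where
  critical : SecondOrderCritical (degreeLE ℝ d) L N (g * h₁) (g * h₂)
  isCoprime : IsCoprime h₁ h₂
  g_ne_zero : g ≠ 0
  h₁_ne_zero : h₁ ≠ 0
  natDegree_h₁ : h₁.natDegree + g.natDegree = d
  natDegree_h₂_le : h₂.natDegree + g.natDegree ≤ d

namespace FactoredCritical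

variable {L : ℝ[X] →ₗ[ℝ] ℝ} {N : ℝ[X] → ℝ} {d : ℕ} {g h₁ h₂ : ℝ[X]}

lemma natDegree_mul_sq_le (hf : FactoredCritical L N d g h₁ h₂) {s : ℝ[X]}
    (hs : s.natDegree ≤ g.natDegree) : ((h₁ ^ 2 + h₂ ^ 2) * s ^ 2).natDegree ≤ 2 * d := by
  have := natDegree_add_le (h₁ ^ 2) (h₂ ^ 2)
  have := natDegree_mul_le (p := h₁ ^ 2 + h₂ ^ 2) (q := s ^ 2)
  simp only [natDegree_pow] at *
  have := hf.natDegree_h₁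
  have := hf.natDegree_h₂_le
  omega

lemma exists_eq_mul_add_mul (hf : FactoredCritical L N d g h₁ h₂) {G : ℝ[X]}
    (hG : G.natDegree ≤ 2 * d - g.natDegree) :
    ∃ A B : ℝ[X], G = h₁ * A + h₂ * B ∧ A.natDegree ≤ d ∧ B.natDegree ≤ d := by
  have := hf.natDegree_h₁
  have := hf.natDegree_h₂_le
  obtain ⟨A, B, rfl, hA, hB⟩ := hf.isCoprime.exists_eq_mul_add_mul_natDegree_le hf.h₁_ne_zero
    (n := d) (by omega) (by omega) (F := G) (by omega)
  exact ⟨A, B, by ring, hA, hB⟩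

lemma vanishesOnMultiples_g (hf : FactoredCritical L N d g h₁ h₂) :
    VanishesOnMultiples L (2 * d) g := by
  rintro _ hP ⟨G, rfl⟩
  rcases eq_or_ne G 0 with rfl | hG0
  · simp
  rw [natDegree_mul hf.g_ne_zero hG0] at hP
  obtain ⟨A, B, rfl, hA, hB⟩ := hf.exists_eq_mul_add_mul (G := G) (by omega)
  rw [show g * (h₁ * A + h₂ * B) = g * h₁ * A + g * h₂ * B by ring]
  exact hf.critical.grad A (mem_degreeLE_of_natDegree_le hA) B (mem_degreeLE_of_natDegree_le hB)

/-- `(-h₂ s, h₁ s)` lies in the kernel of `v ↦ g h₁ v₁ + g h₂ v₂`, so moving `P` along it does not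
change the `N`-term of the Hessian condition. -/
lemma hess_along_kernel (hf : FactoredCritical L N d g h₁ h₂) {s : ℝ[X]}
    (hs : s.natDegree ≤ g.natDegree) {P₁ P₂ : ℝ[X]} (hP₁ : P₁.natDegree ≤ d)
    (hP₂ : P₂.natDegree ≤ d) (t : ℝ) :
    0 ≤ L ((h₁ ^ 2 + h₂ ^ 2) * s ^ 2) * t ^ 2 + 2 * L (s * (h₁ * P₂ - h₂ * P₁)) * t
      + (L (P₁ ^ 2 + P₂ ^ 2) + N (g * h₁ * P₁ + g * h₂ * P₂)) := by
  have hdeg (h : ℝ[X]) (hh : h.natDegree + g.natDegree ≤ d) : (t • (h * s)).natDegree ≤ d :=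
    (natDegree_smul_le _ _).trans (natDegree_mul_le.trans (by omega))
  have hv₁ : (P₁ - t • (h₂ * s)).natDegree ≤ d :=
    (natDegree_sub_le _ _).trans (max_le hP₁ (hdeg h₂ hf.natDegree_h₂_le))
  have hv₂ : (P₂ + t • (h₁ * s)).natDegree ≤ d :=
    (natDegree_add_le _ _).trans (max_le hP₂ (hdeg h₁ hf.natDegree_h₁.le))
  have key := hf.critical.hess _ (mem_degreeLE_of_natDegree_le hv₁) _
    (mem_degreeLE_of_natDegree_le hv₂)
  have hsq : (P₁ - t • (h₂ * s)) ^ 2 + (P₂ + t • (h₁ * s)) ^ 2 = (P₁ ^ 2 + P₂ ^ 2)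
      + (2 * t) • (s * (h₁ * P₂ - h₂ * P₁)) + (t ^ 2) • ((h₁ ^ 2 + h₂ ^ 2) * s ^ 2) := by
    simp only [smul_eq_C_mul, map_mul, map_pow, map_ofNat]
    ring
  have hm : g * h₁ * (P₁ - t • (h₂ * s)) + g * h₂ * (P₂ + t • (h₁ * s))
      = g * h₁ * P₁ + g * h₂ * P₂ := by
    simp only [smul_eq_C_mul]
    ring
  rw [hsq, hm, map_add, map_add, map_smul, map_smul, smul_eq_mul, smul_eq_mul] at key
  linarith

lemma apply_mul_sq_nonneg (hf : FactoredCritical L N d g h₁ h₂) {s : ℝ[X]}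
    (hs : s.natDegree ≤ g.natDegree) : 0 ≤ L ((h₁ ^ 2 + h₂ ^ 2) * s ^ 2) :=
  nonneg_of_forall_mul_sq_add_nonneg fun t => by
    simpa using hf.hess_along_kernel hs (P₁ := 0) (P₂ := 0) (by simp) (by simp) t

lemma apply_mul_eq_zero (hf : FactoredCritical L N d g h₁ h₂) {s w : ℝ[X]}
    (hs : s.natDegree ≤ g.natDegree) (h0 : L ((h₁ ^ 2 + h₂ ^ 2) * s ^ 2) = 0)
    (hw : w.natDegree ≤ 2 * d - g.natDegree) : L (s * w) = 0 := by
  obtain ⟨A, B, rfl, hA, hB⟩ := hf.exists_eq_mul_add_mul hw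
  have key := hf.hess_along_kernel hs (P₁ := -B) (P₂ := A) (by rwa [natDegree_neg]) hA
  simp only [h0, zero_mul, zero_add, mul_neg, sub_neg_eq_add] at key
  simpa [add_comm] using eq_zero_of_forall_mul_add_nonneg key

lemma vanishesOnMultiples_gcd (hf : FactoredCritical L N d g h₁ h₂) {γ s : ℝ[X]}
    (hγ : VanishesOnMultiples L (2 * d) γ) (hγ0 : γ ≠ 0) (hγg : γ.natDegree ≤ g.natDegree)
    (hs : s.natDegree ≤ g.natDegree) (h0 : L ((h₁ ^ 2 + h₂ ^ 2) * s ^ 2) = 0) :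
    VanishesOnMultiples L (2 * d) (gcd γ s) := by
  intro P hP hdvd
  obtain ⟨A, B, rfl, hB⟩ := exists_eq_mul_add_mul_degree_lt_of_gcd_dvd hγ0 hdvd
  have hBdeg : B.natDegree ≤ g.natDegree := (natDegree_le_natDegree hB.le).trans hγg
  have hgd : g.natDegree ≤ d := by have := hf.natDegree_h₁; omega
  have hBs : L (B * s) = 0 := by
    rw [mul_comm]
    exact hf.apply_mul_eq_zero hs h0 (by omega)
  have hAγ : L (A * γ) = 0 := by
    refine hγ _ ?_ (dvd_mul_left γ A)
    rw [show A * γ = (A * γ + B * s) - B * s by ring]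
    refine (natDegree_sub_le _ _).trans (max_le hP (natDegree_mul_le.trans ?_))
    omega
  rw [map_add, hAγ, hBs, add_zero]

lemma exists_minimal_vanishesOnMultiples (hf : FactoredCritical L N d g h₁ h₂) :
    ∃ γ, γ ∣ g ∧ VanishesOnMultiples L (2 * d) γ ∧
      ∀ s, s ≠ 0 → s.natDegree < γ.natDegree → L ((h₁ ^ 2 + h₂ ^ 2) * s ^ 2) ≠ 0 := by
  obtain ⟨γ, ⟨hγg, hγ⟩, hmin⟩ := (measure natDegree).wf.has_min
    {γ | γ ∣ g ∧ VanishesOnMultiples L (2 * d) γ} ⟨g, dvd_rfl, hf.vanishesOnMultiples_g⟩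
  have hγ0 : γ ≠ 0 := ne_zero_of_dvd_ne_zero hf.g_ne_zero hγg
  have hγe : γ.natDegree ≤ g.natDegree := natDegree_le_of_dvd hγg hf.g_ne_zero
  refine ⟨γ, hγg, hγ, fun s hs0 hlt h0 => hmin (gcd γ s)
    ⟨(gcd_dvd_left γ s).trans hγg, hf.vanishesOnMultiples_gcd hγ hγ0 hγe (by omega) h0⟩ ?_⟩
  exact (natDegree_le_of_dvd (gcd_dvd_right γ s) hs0).trans_lt hlt

lemma not_dvd_mul_sq_of_minimal (hf : FactoredCritical L N d g h₁ h₂) {γ : ℝ[X]} (hγg : γ ∣ g)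
    (hγ : VanishesOnMultiples L (2 * d) γ)
    (hmin : ∀ s, s ≠ 0 → s.natDegree < γ.natDegree → L ((h₁ ^ 2 + h₂ ^ 2) * s ^ 2) ≠ 0)
    {s : ℝ[X]} (hs0 : s ≠ 0) (hlt : s.natDegree < γ.natDegree) :
    ¬ γ ∣ (h₁ ^ 2 + h₂ ^ 2) * s ^ 2 := fun h =>
  hmin s hs0 hlt <| hγ _ (hf.natDegree_mul_sq_le <|
    hlt.le.trans (natDegree_le_of_dvd hγg hf.g_ne_zero)) h

lemma im_eq_zero_of_minimal (hf : FactoredCritical L N d g h₁ h₂) {γ : ℝ[X]} (hγg : γ ∣ g)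
    (hγ : VanishesOnMultiples L (2 * d) γ)
    (hmin : ∀ s, s ≠ 0 → s.natDegree < γ.natDegree → L ((h₁ ^ 2 + h₂ ^ 2) * s ^ 2) ≠ 0)
    {z : ℂ} (hz : aeval z γ = 0) : z.im = 0 := by
  by_contra him
  have hγ0 : γ ≠ 0 := ne_zero_of_dvd_ne_zero hf.g_ne_zero hγg
  set q := (X - C z.re) ^ 2 + C (z.im ^ 2) with hq
  obtain ⟨A, hA⟩ := sq_add_C_dvd_of_aeval_eq_zero hz him
  have hA0 : A ≠ 0 := by rintro rfl; rw [mul_zero] at hA; exact hγ0 hA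
  have hq2 : q.natDegree = 2 := by
    rw [hq, natDegree_add_C, natDegree_pow, natDegree_X_sub_C]
  have hq0 : q ≠ 0 := by rintro h; rw [h, natDegree_zero] at hq2; omega
  have hdeg : γ.natDegree = 2 + A.natDegree := by rw [hA, natDegree_mul hq0 hA0, hq2]
  have hγe := natDegree_le_of_dvd hγg hf.g_ne_zero
  have hAX : (A * (X - C z.re)).natDegree ≤ g.natDegree := by
    rw [natDegree_mul hA0 (X_sub_C_ne_zero _), natDegree_X_sub_C]
    omega
  have hsplit : (h₁ ^ 2 + h₂ ^ 2) * A ^ 2 * q = z.im ^ 2 • ((h₁ ^ 2 + h₂ ^ 2) * A ^ 2)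
      + (h₁ ^ 2 + h₂ ^ 2) * (A * (X - C z.re)) ^ 2 := by
    rw [hq, smul_eq_C_mul]
    ring
  have hzero : L ((h₁ ^ 2 + h₂ ^ 2) * A ^ 2 * q) = 0 := by
    refine hγ _ ?_ ⟨(h₁ ^ 2 + h₂ ^ 2) * A, by rw [hA]; ring⟩
    rw [hsplit]
    refine (natDegree_add_le _ _).trans (max_le ((natDegree_smul_le _ _).trans ?_)
      (hf.natDegree_mul_sq_le hAX))
    exact hf.natDegree_mul_sq_le (by omega)
  rw [hsplit, map_add, map_smul, smul_eq_mul] at hzero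
  have h₁ := hf.apply_mul_sq_nonneg (s := A) (by omega)
  have h₂ := hf.apply_mul_sq_nonneg hAX
  have him2 : 0 < z.im ^ 2 := by positivity
  exact hmin A hA0 (by omega) (by nlinarith)

lemma apply_sq_nonneg (hf : FactoredCritical L N d g h₁ h₂) {T : ℝ[X]} (hT : T.natDegree ≤ d) :
    0 ≤ L (T ^ 2) := by
  obtain ⟨γ, hγg, hγ, hmin⟩ := hf.exists_minimal_vanishesOnMultiples
  have hγ0 : γ ≠ 0 := ne_zero_of_dvd_ne_zero hf.g_ne_zero hγg
  have hndvd := fun s => hf.not_dvd_mul_sq_of_minimal hγg hγ hmin (s := s)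
  obtain ⟨s, hs, hdvd⟩ := (squarefree_of_forall_not_dvd_mul_sq hγ0 hndvd).exists_dvd_sq_sub_mul_sq
    (fun _ => hf.im_eq_zero_of_minimal hγg hγ hmin)
    (fun _ => eval_sq_add_sq_pos_of_forall_not_dvd hγ0 hndvd) T
  have hse : s.natDegree ≤ g.natDegree :=
    (natDegree_le_natDegree hs.le).trans (natDegree_le_of_dvd hγg hf.g_ne_zero)
  have hdeg : (T ^ 2 - (h₁ ^ 2 + h₂ ^ 2) * s ^ 2).natDegree ≤ 2 * d := by
    refine (natDegree_sub_le _ _).trans (max_le ?_ (hf.natDegree_mul_sq_le hse))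
    rw [natDegree_pow]
    omega
  have := hγ _ hdeg hdvd
  rw [map_sub, sub_eq_zero] at this
  exact this ▸ hf.apply_mul_sq_nonneg hse

end FactoredCritical

namespace SecondOrderCritical

section Algebra

variable {A B : Type*} [CommRing A] [Algebra ℝ A] [CommRing B] [Algebra ℝ B]
  {V : Submodule ℝ A} {ℓ : A →ₗ[ℝ] ℝ} {N : A → ℝ} {u₁ u₂ : A}

lemma swap (hc : SecondOrderCritical V ℓ N u₁ u₂) : SecondOrderCritical V ℓ N u₂ u₁ where
  grad v₁ hv₁ v₂ hv₂ := by
    rw [add_comm]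
    exact hc.grad v₂ hv₂ v₁ hv₁
  hess v₁ hv₁ v₂ hv₂ := by
    rw [add_comm (v₁ ^ 2), add_comm (u₂ * v₁)]
    exact hc.hess v₂ hv₂ v₁ hv₁

lemma map (hc : SecondOrderCritical V ℓ N u₁ u₂) (e : A ≃ₐ[ℝ] B) {W : Submodule ℝ B}
    (hW : ∀ w ∈ W, e.symm w ∈ V) :
    SecondOrderCritical W (ℓ ∘ₗ e.symm.toLinearMap) (N ∘ e.symm) (e u₁) (e u₂) where
  grad w₁ hw₁ w₂ hw₂ := by simpa using hc.grad _ (hW w₁ hw₁) _ (hW w₂ hw₂)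
  hess w₁ hw₁ w₂ hw₂ := by simpa using hc.hess _ (hW w₁ hw₁) _ (hW w₂ hw₂)

lemma apply_sq_nonneg_of_eq_zero (hc : SecondOrderCritical V ℓ N 0 0) {t : A} (ht : t ∈ V) :
    0 ≤ ℓ (t ^ 2) :=
  nonneg_of_forall_mul_sq_add_nonneg fun c => by
    have h := hc.hess (c • t) (V.smul_mem c ht) 0 V.zero_mem
    simp only [_root_.smul_pow, map_smul, smul_eq_mul, zero_mul, add_zero, ne_eq,
      OfNat.ofNat_ne_zero, not_false_eq_true, zero_pow] at h
    linarith

end Algebra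

lemma factoredCritical {L : ℝ[X] →ₗ[ℝ] ℝ} {N : ℝ[X] → ℝ} {d : ℕ} {U₁ U₂ : ℝ[X]}
    (hc : SecondOrderCritical (degreeLE ℝ d) L N U₁ U₂) (hU₁ : U₁.degree = d)
    (hU₂ : U₂.natDegree ≤ d) :
    FactoredCritical L N d (gcd U₁ U₂) (U₁ / gcd U₁ U₂) (U₂ / gcd U₁ U₂) := by
  have hU₁0 : U₁ ≠ 0 := by rintro rfl; simp at hU₁
  have hδ : gcd U₁ U₂ ≠ 0 := gcd_ne_zero_of_left hU₁0
  have h₁ := EuclideanDomain.mul_div_cancel' hδ (gcd_dvd_left U₁ U₂)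
  have h₂ := EuclideanDomain.mul_div_cancel' hδ (gcd_dvd_right U₁ U₂)
  have hd : U₁.natDegree = d := natDegree_eq_of_degree_eq_some hU₁
  have hh₁0 : U₁ / gcd U₁ U₂ ≠ 0 := left_div_gcd_ne_zero hU₁0
  refine ⟨by rwa [h₁, h₂], isCoprime_div_gcd_div_gcd_of_gcd_ne_zero hδ, hδ, hh₁0, ?_, ?_⟩
  · have := natDegree_mul hδ hh₁0
    rw [h₁, hd] at this
    omega
  · rcases eq_or_ne (U₂ / gcd U₁ U₂) 0 with h | h
    · rw [h, natDegree_zero, zero_add, ← hd]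
      exact natDegree_le_of_dvd (gcd_dvd_left U₁ U₂) hU₁0
    · rwa [add_comm, ← natDegree_mul hδ h, h₂]

section Forms

open MvPolynomial

variable {ℓ : MvPolynomial (Fin 2) ℝ →ₗ[ℝ] ℝ} {N : MvPolynomial (Fin 2) ℝ → ℝ} {d : ℕ}
  {u₁ u₂ : MvPolynomial (Fin 2) ℝ}

lemma dehomogenize (hc : SecondOrderCritical (homogeneousSubmodule (Fin 2) ℝ d) ℓ N u₁ u₂)
    (hu₁ : u₁.IsHomogeneous d) (hu₂ : u₂.IsHomogeneous d) :
    SecondOrderCritical (degreeLE ℝ d) (ℓ ∘ₗ homogenizeLM (2 * d))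
      (fun P => N (P.homogenize (2 * d)))
      (aeval ![(Polynomial.X : ℝ[X]), 1] u₁) (aeval ![(Polynomial.X : ℝ[X]), 1] u₂) := by
  have hmem (P : ℝ[X]) : P.homogenize d ∈ homogeneousSubmodule (Fin 2) ℝ d :=
    isHomogeneous_homogenize P
  have hdeg {P : ℝ[X]} (hP : P ∈ degreeLE ℝ d) : P.natDegree ≤ d :=
    natDegree_le_of_degree_le (mem_degreeLE.1 hP)
  have key {P₁ P₂ : ℝ[X]} (hP₁ : P₁ ∈ degreeLE ℝ d) (hP₂ : P₂ ∈ degreeLE ℝ d) :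
      Polynomial.homogenize (aeval ![(Polynomial.X : ℝ[X]), 1] u₁ * P₁
        + aeval ![(Polynomial.X : ℝ[X]), 1] u₂ * P₂) (2 * d)
        = u₁ * P₁.homogenize d + u₂ * P₂.homogenize d := by
    rw [homogenize_add, homogenize_mul_two_mul (natDegree_aeval_X_one_le hu₁) (hdeg hP₁),
      homogenize_mul_two_mul (natDegree_aeval_X_one_le hu₂) (hdeg hP₂),
      homogenize_eq_of_isHomogeneous hu₁ rfl, homogenize_eq_of_isHomogeneous hu₂ rfl]
  refine ⟨fun P₁ hP₁ P₂ hP₂ => ?_, fun P₁ hP₁ P₂ hP₂ => ?_⟩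
  · simpa [key hP₁ hP₂] using hc.grad _ (hmem P₁) _ (hmem P₂)
  · simpa [key hP₁ hP₂, sq, homogenize_mul_two_mul (hdeg hP₁) (hdeg hP₁),
      homogenize_mul_two_mul (hdeg hP₂) (hdeg hP₂)] using hc.hess _ (hmem P₁) _ (hmem P₂)

lemma apply_sq_nonneg_of_ne_zero
    (hc : SecondOrderCritical (homogeneousSubmodule (Fin 2) ℝ d) ℓ N u₁ u₂)
    (hu₁ : u₁.IsHomogeneous d) (hu₂ : u₂.IsHomogeneous d) (hu₁0 : u₁ ≠ 0)
    {t : MvPolynomial (Fin 2) ℝ} (ht : t.IsHomogeneous d) : 0 ≤ ℓ (t ^ 2) := by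
  obtain ⟨s, hs⟩ := exists_degree_aeval_shear_eq hu₁ hu₁0
  have hc' := (hc.map (shear s) fun w hw => isHomogeneous_shear_symm hw).dehomogenize
    (isHomogeneous_shear hu₁) (isHomogeneous_shear hu₂)
  have hT := natDegree_aeval_X_one_le (isHomogeneous_shear (s := s) ht)
  have key := (hc'.factoredCritical hs
    (natDegree_aeval_X_one_le (isHomogeneous_shear hu₂))).apply_sq_nonneg hT
  rwa [LinearMap.comp_apply, homogenizeLM_apply, sq, homogenize_mul_two_mul hT hT,
    homogenize_eq_of_isHomogeneous (isHomogeneous_shear ht) rfl, LinearMap.comp_apply,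
    AlgEquiv.toLinearMap_apply, ← map_mul, AlgEquiv.symm_apply_apply, ← sq] at key

theorem apply_sq_nonneg (hc : SecondOrderCritical (homogeneousSubmodule (Fin 2) ℝ d) ℓ N u₁ u₂)
    (hu₁ : u₁.IsHomogeneous d) (hu₂ : u₂.IsHomogeneous d) {t : MvPolynomial (Fin 2) ℝ}
    (ht : t.IsHomogeneous d) : 0 ≤ ℓ (t ^ 2) := by
  rcases eq_or_ne u₁ 0 with rfl | hu₁0
  · rcases eq_or_ne u₂ 0 with rfl | hu₂0
    · exact hc.apply_sq_nonneg_of_eq_zero ht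
    · exact hc.swap.apply_sq_nonneg_of_ne_zero hu₂ hu₁ hu₂0 ht
  · exact hc.apply_sq_nonneg_of_ne_zero hu₁ hu₂ hu₁0 ht

end Forms

end SecondOrderCritical

open MvPolynomial

theorem socp_is_projection_general
    (d : ℕ)
    (B : MvPolynomial (Fin 2) ℝ →ₗ[ℝ] MvPolynomial (Fin 2) ℝ →ₗ[ℝ] ℝ)
    (hsymm : ∀ a b : MvPolynomial (Fin 2) ℝ, B a b = B b a)
    (hpos : ∀ q : MvPolynomial (Fin 2) ℝ, q.IsHomogeneous (2 * d) → q ≠ 0 → 0 < B q q)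
    (u₁ u₂ p : MvPolynomial (Fin 2) ℝ)
    (hu₁ : u₁.IsHomogeneous d) (hu₂ : u₂.IsHomogeneous d)
    (hgrad : ∀ v₁ v₂ : MvPolynomial (Fin 2) ℝ, v₁.IsHomogeneous d → v₂.IsHomogeneous d →
      B (u₁ * v₁ + u₂ * v₂) (u₁ ^ 2 + u₂ ^ 2 - p) = 0)
    (hhess : ∀ v₁ v₂ : MvPolynomial (Fin 2) ℝ, v₁.IsHomogeneous d → v₂.IsHomogeneous d →
      0 ≤ B (v₁ ^ 2 + v₂ ^ 2) (u₁ ^ 2 + u₂ ^ 2 - p)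
        + 2 * B (u₁ * v₁ + u₂ * v₂) (u₁ * v₁ + u₂ * v₂)) :
    ∀ q : MvPolynomial (Fin 2) ℝ, q.IsHomogeneous (2 * d) →
      (∃ (N : ℕ) (t : Fin N → MvPolynomial (Fin 2) ℝ),
        (∀ i, (t i).IsHomogeneous d) ∧ q = ∑ i, (t i) ^ 2) →
      B (u₁ ^ 2 + u₂ ^ 2 - p) (u₁ ^ 2 + u₂ ^ 2 - p) ≤ B (q - p) (q - p) := by
  rintro q hq ⟨n, t, ht, rfl⟩
  have hc : SecondOrderCritical (homogeneousSubmodule (Fin 2) ℝ d)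
      (B.flip (u₁ ^ 2 + u₂ ^ 2 - p)) (fun m => 2 * B m m) u₁ u₂ :=
    ⟨fun v₁ hv₁ v₂ hv₂ => hgrad v₁ v₂ hv₁ hv₂, fun v₁ hv₁ v₂ hv₂ => hhess v₁ v₂ hv₁ hv₂⟩
  have hU : B (u₁ ^ 2 + u₂ ^ 2) (u₁ ^ 2 + u₂ ^ 2 - p) = 0 := by
    simpa only [sq] using hgrad u₁ u₂ hu₁ hu₂
  have hsos : 0 ≤ B (∑ i, t i ^ 2) (u₁ ^ 2 + u₂ ^ 2 - p) := by
    rw [map_sum, LinearMap.sum_apply]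
    exact Finset.sum_nonneg fun i _ => hc.apply_sq_nonneg hu₁ hu₂ (ht i)
  have hUd : (u₁ ^ 2 + u₂ ^ 2).IsHomogeneous (2 * d) := by
    simpa only [mul_comm] using (hu₁.pow 2).add (hu₂.pow 2)
  refine B.apply_sub_le_apply_sub_of_nonneg hsymm hU hsos ?_
  rcases eq_or_ne (∑ i, t i ^ 2 - (u₁ ^ 2 + u₂ ^ 2)) 0 with h | h
  · simp [h]
  · exact (hpos _ (hq.sub hUd) h).le

/-- Projection onto the sum of squares cone: at any second-order critical point of `f_p`,
`u₁² + u₂²` is the projection of `p` onto the sum of squares cone. -/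
theorem socp_is_projection
    (d : ℕ)
    (B : MvPolynomial (Fin 2) ℝ →ₗ[ℝ] MvPolynomial (Fin 2) ℝ →ₗ[ℝ] ℝ)
    (hsymm : ∀ a b : MvPolynomial (Fin 2) ℝ, B a b = B b a)
    (hpos : ∀ q : MvPolynomial (Fin 2) ℝ, q.IsHomogeneous (2 * d) → q ≠ 0 → 0 < B q q)
    (u₁ u₂ p : MvPolynomial (Fin 2) ℝ)
    (hu₁ : u₁.IsHomogeneous d) (hu₂ : u₂.IsHomogeneous d)
    (hp : p.IsHomogeneous (2 * d))
    (hgrad : ∀ v₁ v₂ : MvPolynomial (Fin 2) ℝ, v₁.IsHomogeneous d → v₂.IsHomogeneous d →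
      B (u₁ * v₁ + u₂ * v₂) (u₁ ^ 2 + u₂ ^ 2 - p) = 0)
    (hhess : ∀ v₁ v₂ : MvPolynomial (Fin 2) ℝ, v₁.IsHomogeneous d → v₂.IsHomogeneous d →
      0 ≤ B (v₁ ^ 2 + v₂ ^ 2) (u₁ ^ 2 + u₂ ^ 2 - p)
        + 2 * B (u₁ * v₁ + u₂ * v₂) (u₁ * v₁ + u₂ * v₂)) :
    ∀ q : MvPolynomial (Fin 2) ℝ, q.IsHomogeneous (2 * d) →
      (∃ (N : ℕ) (t : Fin N → MvPolynomial (Fin 2) ℝ),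
        (∀ i, (t i).IsHomogeneous d) ∧ q = ∑ i, (t i) ^ 2) →
      B (u₁ ^ 2 + u₂ ^ 2 - p) (u₁ ^ 2 + u₂ ^ 2 - p) ≤ B (q - p) (q - p) :=
  socp_is_projection_general d B hsymm hpos u₁ u₂ p hu₁ hu₂ hgrad hhess
end

section
/- Let m, d be natural numbers, let B : MvPolynomial (Fin 2) ℝ →ₗ[ℝ] (Fin m → ℝ) be a linear map, and let b ∈ ℝᵐ (with ℝᵐ carrying the Euclidean inner product ⟨·,·⟩ and norm ‖·‖). Suppose there exists a binary form p of degree 2d that is a sum of squares of binary forms of degree d with B(p) = b. Let u₁, u₂ be binary forms of degree d such that: (gradient) ⟨B(u₁v₁ + u₂v₂), B(u₁² + u₂²) − b⟩ = 0 for all binary forms v₁, v₂ of degree d; and (Hessian) ⟨B(v₁² + v₂²), B(u₁² + u₂²) − b⟩ + 2‖B(u₁v₁ + u₂v₂)‖² ≥ 0 for all binary forms v₁, v₂ of degree d. Then B(u₁² + u₂²) = b. -/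
/-!
Put `r = B(u₁² + u₂²) - b` and `ℓ p = ⟪B p, r⟫`. The gradient condition in the direction `u`
gives `ℓ(u₁² + u₂²) = 0`, hence `‖r‖² = -ℓ p` for the feasible sum of squares `p`, and it
suffices to show that `ℓ` is nonnegative on squares of forms of degree `d`.

Dehomogenizing turns `ℓ` into a functional `L` on univariate polynomials. Write `u₁ = g a`,
`u₂ = g b` with `a, b` coprime and `c = max (deg a) (deg b)`. The gradient condition makes `L`
vanish on the multiples of `g` of degree `≤ d + deg g + c`. The kernel of
`(v₁, v₂) ↦ u₁ v₁ + u₂ v₂` consists of the pairs `(b h, -a h)`; on it the Hessian condition says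
`L((a² + b²) h²) ≥ 0`, and where this vanishes it forces `L(h w) = 0` for all `w`. This removes
from the multiplier `g`, one common factor at a time, everything it shares with `a² + b²`. Once
the multiplier `f` is coprime to `a² + b² = (a + i b)(a - i b)`, division by `a + i b` over `ℂ`
writes every `q` of degree `≤ d` as `q² = (a² + b²)(h₁² + h₂²) + f w` with `L(f w) = 0`.
-/

namespace Polynomial

section Field

variable {K : Type*} [Field K]

theorem exists_mul_add_mul_eq_of_isCoprime {a b w : K[X]} (hab : IsCoprime a b) (ha : a ≠ 0)
    {n₁ n₂ : ℕ} (ha₂ : a.natDegree ≤ n₂ + 1) (hb : b.natDegree + n₂ ≤ a.natDegree + n₁)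
    (hw : w.natDegree ≤ a.natDegree + n₁) :
    ∃ v₁ v₂, v₁.natDegree ≤ n₁ ∧ v₂.natDegree ≤ n₂ ∧ a * v₁ + b * v₂ = w := by
  obtain ⟨x, y, hxy⟩ := hab
  set v₁ := x * w + b * (y * w / a)
  set v₂ := y * w % a
  have hsum : a * v₁ + b * v₂ = w := by
    linear_combination b * EuclideanDomain.div_add_mod (y * w) a + w * hxy
  have hv₂ : v₂.natDegree ≤ n₂ := by
    rcases eq_or_ne v₂ 0 with h | h
    · simp [h]
    · have := natDegree_lt_natDegree h (degree_mod_lt _ ha)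
      omega
  refine ⟨v₁, v₂, ?_, hv₂, hsum⟩
  rcases eq_or_ne v₁ 0 with h | h
  · simp [h]
  · have hav₁ : (a * v₁).natDegree ≤ max w.natDegree (b * v₂).natDegree := by
      rw [show a * v₁ = w - b * v₂ by rw [← hsum]; ring]
      exact natDegree_sub_le _ _
    have := natDegree_mul_le (p := b) (q := v₂)
    rw [natDegree_mul ha h] at hav₁
    omega

theorem exists_mul_add_mul_eq_of_natDegree_le {a b w : K[X]} (hab : IsCoprime a b) {n : ℕ}
    (hn : max a.natDegree b.natDegree ≤ n + 1)
    (hw : w.natDegree ≤ max a.natDegree b.natDegree + n) :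
    ∃ v₁ v₂, v₁.natDegree ≤ n ∧ v₂.natDegree ≤ n ∧ a * v₁ + b * v₂ = w := by
  wlog h : b.natDegree ≤ a.natDegree ∧ a ≠ 0 generalizing a b
  · have h' : a.natDegree ≤ b.natDegree ∧ b ≠ 0 := by
      rcases eq_or_ne a 0 with rfl | ha
      · exact ⟨by simp, (isCoprime_zero_left.1 hab).ne_zero⟩
      · have hlt : a.natDegree < b.natDegree := lt_of_not_ge fun hle => h ⟨hle, ha⟩
        exact ⟨hlt.le, fun hb => by simp [hb] at hlt⟩
    obtain ⟨v₂, v₁, h₂, h₁, hsum⟩ :=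
      this hab.symm (by rwa [max_comm]) (by rwa [max_comm]) h'
    exact ⟨v₁, v₂, h₁, h₂, by rw [← hsum, add_comm]⟩
  rw [max_eq_left h.1] at hn hw
  exact exists_mul_add_mul_eq_of_isCoprime hab h.2 hn (by omega) hw

theorem natDegree_add_max_natDegree_le {g a b : K[X]} {d : ℕ} (hg : g ≠ 0) (hab : a ≠ 0 ∨ b ≠ 0)
    (ha : (g * a).natDegree ≤ d) (hb : (g * b).natDegree ≤ d) :
    g.natDegree + max a.natDegree b.natDegree ≤ d := by
  rcases eq_or_ne a 0 with rfl | ha₀ <;> rcases eq_or_ne b 0 with rfl | hb₀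
  · simp at hab
  · rw [natDegree_mul hg hb₀] at hb
    simpa using hb
  · rw [natDegree_mul hg ha₀] at ha
    simpa using ha
  · rw [natDegree_mul hg ha₀] at ha
    rw [natDegree_mul hg hb₀] at hb
    omega

end Field

theorem map_mul_eq_zero_of_map_mul_X_pow_eq_zero {R M : Type*} [CommRing R] [NoZeroDivisors R]
    [AddCommGroup M] [Module R M] {L : R[X] →ₗ[R] M} {f w : R[X]} {n : ℕ} (hf : f ≠ 0)
    (h : ∀ j, f.natDegree + j ≤ n → L (f * X ^ j) = 0) (hw : (f * w).natDegree ≤ n) :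
    L (f * w) = 0 := by
  rcases eq_or_ne w 0 with rfl | hw₀
  · simp
  rw [natDegree_mul hf hw₀] at hw
  rw [w.as_sum_range' _ (Nat.lt_succ_self _), Finset.mul_sum, map_sum]
  refine Finset.sum_eq_zero fun j hj => ?_
  rw [← C_mul_X_pow_eq_monomial, mul_left_comm, ← smul_eq_C_mul, map_smul,
    h j (by have := Finset.mem_range.1 hj; omega), smul_zero]

theorem map_mul_eq_zero_of_map_mul_mul_eq_zero {K : Type*} [Field K] {L : K[X] →ₗ[K] K}
    {s f g : K[X]} {c D d : ℕ}
    (hnull : ∀ h : K[X], h.natDegree + c ≤ d → L (s * h ^ 2) = 0 →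
      ∀ w : K[X], w.natDegree ≤ d + c → L (h * w) = 0)
    (hs : s.natDegree ≤ 2 * c) (hDd : D ≤ d) (hg : g ∣ s) (hf : f ≠ 0) (hfD : f.natDegree + c ≤ D)
    (hvan : ∀ w, (g * f * w).natDegree ≤ d + D → L (g * f * w) = 0)
    {w : K[X]} (hw : (f * w).natDegree ≤ d + D) : L (f * w) = 0 := by
  refine map_mul_eq_zero_of_map_mul_X_pow_eq_zero hf (fun j hj => ?_) hw
  -- `s * (f * X ^ i) ^ 2` is a multiple of `g * f` of degree `≤ d + D`,
  -- so `hnull` applies to `f * X ^ i`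
  obtain ⟨s', rfl⟩ := hg
  set i := min j (D - c - f.natDegree)
  have hh : (f * X ^ i).natDegree ≤ D - c :=
    natDegree_mul_le.trans (by rw [natDegree_X_pow]; omega)
  have hsq : L (g * s' * (f * X ^ i) ^ 2) = 0 := by
    have e : g * s' * (f * X ^ i) ^ 2 = g * f * (s' * f * X ^ (2 * i)) := by ring
    have hdeg : (g * s' * (f * X ^ i) ^ 2).natDegree ≤ d + D := natDegree_mul_le.trans <| by
      have := natDegree_pow_le (p := f * X ^ i) (n := 2)
      omega
    rw [e] at hdeg ⊢
    exact hvan _ hdeg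
  rw [show f * X ^ j = f * X ^ i * X ^ (j - i) by
    rw [mul_assoc, ← pow_add, Nat.add_sub_cancel' (min_le_left _ _)]]
  exact hnull _ (by omega) hsq _ (by rw [natDegree_X_pow]; omega)

theorem map_mul_add_mul_eq_zero_of_map_sq_add_sq_eq_zero {K : Type*} [Field K] [LinearOrder K]
    [IsStrictOrderedRing K] {L : K[X] →ₗ[K] K} {φ : K[X] → K} {u₁ u₂ k₁ k₂ : K[X]} {d : ℕ}
    (hhess : ∀ v₁ v₂ : K[X], v₁.natDegree ≤ d → v₂.natDegree ≤ d →
      0 ≤ L (v₁ ^ 2 + v₂ ^ 2) + φ (u₁ * v₁ + u₂ * v₂))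
    (hk₁ : k₁.natDegree ≤ d) (hk₂ : k₂.natDegree ≤ d) (hk : u₁ * k₁ + u₂ * k₂ = 0)
    (hnull : L (k₁ ^ 2 + k₂ ^ 2) = 0) {v₁ v₂ : K[X]} (hv₁ : v₁.natDegree ≤ d)
    (hv₂ : v₂.natDegree ≤ d) : L (k₁ * v₁ + k₂ * v₂) = 0 := by
  -- along `v + t k` the Hessian condition is affine in `t`, so its slope must vanish
  have hquad : ∀ t : K, 0 ≤ 0 * (t * t) + 2 * L (k₁ * v₁ + k₂ * v₂) * t +
      (L (v₁ ^ 2 + v₂ ^ 2) + φ (u₁ * v₁ + u₂ * v₂)) := by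
    intro t
    have hdeg : ∀ v k : K[X], v.natDegree ≤ d → k.natDegree ≤ d → (v + C t * k).natDegree ≤ d :=
      fun v k hv hk => natDegree_add_le_of_degree_le hv ((natDegree_C_mul_le _ _).trans hk)
    have h := hhess _ _ (hdeg v₁ k₁ hv₁ hk₁) (hdeg v₂ k₂ hv₂ hk₂)
    rw [show (v₁ + C t * k₁) ^ 2 + (v₂ + C t * k₂) ^ 2 = v₁ ^ 2 + v₂ ^ 2 +
        (2 * t) • (k₁ * v₁ + k₂ * v₂) + t ^ 2 • (k₁ ^ 2 + k₂ ^ 2) by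
          simp only [smul_eq_C_mul, C_mul, C_pow, C_ofNat]; ring,
      show u₁ * (v₁ + C t * k₁) + u₂ * (v₂ + C t * k₂) = u₁ * v₁ + u₂ * v₂ by
          linear_combination C t * hk,
      map_add, map_add, map_smul, map_smul, hnull] at h
    simp only [smul_eq_mul, mul_zero, add_zero] at h
    linarith
  have := discrim_le_zero hquad
  rw [discrim] at this
  nlinarith [sq_nonneg (L (k₁ * v₁ + k₂ * v₂))]

section Complexify

open Complex

lemma coeff_map_ofReal_add_I_mul (a b : ℝ[X]) (n : ℕ) :
    (a.map ofRealHom + C I * b.map ofRealHom).coeff n = ⟨a.coeff n, b.coeff n⟩ := by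
  apply Complex.ext <;> simp

lemma map_ofReal_add_I_mul_inj {a b a' b' : ℝ[X]}
    (h : a.map ofRealHom + C I * b.map ofRealHom = a'.map ofRealHom + C I * b'.map ofRealHom) :
    a = a' ∧ b = b' := by
  have hn := fun n => congrArg (coeff · n) h
  simp only [coeff_map_ofReal_add_I_mul, Complex.mk.injEq] at hn
  exact ⟨ext fun n => (hn n).1, ext fun n => (hn n).2⟩

lemma exists_eq_map_ofReal_add_I_mul (p : ℂ[X]) :
    ∃ a b : ℝ[X], a.natDegree ≤ p.natDegree ∧ b.natDegree ≤ p.natDegree ∧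
      p = a.map ofRealHom + C I * b.map ofRealHom := by
  let a : ℝ[X] := ⟨⟨p.toFinsupp.coeff.mapRange re zero_re⟩⟩
  let b : ℝ[X] := ⟨⟨p.toFinsupp.coeff.mapRange im zero_im⟩⟩
  have ha : ∀ n, a.coeff n = (p.coeff n).re := fun _ => rfl
  have hb : ∀ n, b.coeff n = (p.coeff n).im := fun _ => rfl
  refine ⟨a, b, natDegree_le_iff_coeff_eq_zero.2 fun n hn => ?_,
    natDegree_le_iff_coeff_eq_zero.2 fun n hn => ?_, ext fun n => ?_⟩
  · simp [ha, coeff_eq_zero_of_natDegree_lt hn]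
  · simp [hb, coeff_eq_zero_of_natDegree_lt hn]
  · rw [coeff_map_ofReal_add_I_mul, ha, hb]

lemma natDegree_map_ofReal_add_I_mul (a b : ℝ[X]) :
    (a.map ofRealHom + C I * b.map ofRealHom).natDegree = max a.natDegree b.natDegree := by
  refine le_antisymm ?_ (max_le ?_ ?_)
  · refine natDegree_add_le_of_le (natDegree_map_le) ((natDegree_C_mul_le _ _).trans ?_)
    exact natDegree_map_le
  · rcases eq_or_ne a 0 with rfl | ha
    · simp
    refine le_natDegree_of_ne_zero fun h => ha ?_
    simp only [coeff_map_ofReal_add_I_mul, Complex.ext_iff] at h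
    simpa using h.1
  · rcases eq_or_ne b 0 with rfl | hb
    · simp
    refine le_natDegree_of_ne_zero fun h => hb ?_
    simp only [coeff_map_ofReal_add_I_mul, Complex.ext_iff] at h
    simpa using h.2

theorem exists_eq_mul_sub_mul_add_mul_of_isCoprime_sq_add_sq {a b f q : ℝ[X]} {c D d : ℕ}
    (hab : a ≠ 0 ∨ b ≠ 0) (hc : max a.natDegree b.natDegree = c)
    (hcop : IsCoprime f (a ^ 2 + b ^ 2)) (hf : f.natDegree + c ≤ D) (hDd : D ≤ d)
    (hq : q.natDegree ≤ d) :
    ∃ h₁ h₂ r₁ r₂ : ℝ[X], h₁.natDegree + c ≤ d ∧ h₂.natDegree + c ≤ d ∧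
      f.natDegree + r₁.natDegree ≤ D ∧ f.natDegree + r₂.natDegree ≤ D ∧
      q = a * h₁ - b * h₂ + f * r₁ ∧ 0 = a * h₂ + b * h₁ + f * r₂ := by
  -- over `ℂ` this is `q = U * α + f * β` with `U = a + i b`,
  -- which is coprime to `f` because `U * conj U = a² + b²`
  have hI : (C I ^ 2 : ℂ[X]) = -1 := by rw [← C_pow, I_sq, C_neg, C_1]
  set U := a.map ofRealHom + C I * b.map ofRealHom
  have hU : U.natDegree = c := hc ▸ natDegree_map_ofReal_add_I_mul a b
  have hU₀ : U ≠ 0 := by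
    rintro h
    obtain ⟨rfl, rfl⟩ := map_ofReal_add_I_mul_inj (a' := 0) (b' := 0) (by simpa using h)
    simp at hab
  have hUf : IsCoprime U (f.map ofRealHom) := by
    have h := (isCoprime_map ofRealHom).2 hcop
    rw [show (a ^ 2 + b ^ 2).map ofRealHom = U * (a.map ofRealHom - C I * b.map ofRealHom) by
      simp only [U, Polynomial.map_add, Polynomial.map_pow]
      linear_combination (b.map ofRealHom) ^ 2 * hI] at h
    exact h.of_mul_right_left.symm
  obtain ⟨α, β, hα, hβ, hsum⟩ := exists_mul_add_mul_eq_of_isCoprime hUf hU₀ (w := q.map ofRealHom)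
    (n₁ := d - c) (n₂ := D - f.natDegree) (by omega) (by rw [natDegree_map]; omega)
    (by rw [natDegree_map]; omega)
  obtain ⟨h₁, h₂, hh₁, hh₂, rfl⟩ := exists_eq_map_ofReal_add_I_mul α
  obtain ⟨r₁, r₂, hr₁, hr₂, rfl⟩ := exists_eq_map_ofReal_add_I_mul β
  obtain ⟨hre, him⟩ := map_ofReal_add_I_mul_inj (a := q) (b := 0)
    (a' := a * h₁ - b * h₂ + f * r₁) (b' := a * h₂ + b * h₁ + f * r₂) <| by
      simp only [Polynomial.map_add, Polynomial.map_sub, Polynomial.map_mul, Polynomial.map_zero]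
      linear_combination (-hsum) + b.map ofRealHom * h₂.map ofRealHom * hI
  exact ⟨h₁, h₂, r₁, r₂, by omega, by omega, by omega, by omega, hre, him⟩

theorem exists_sq_eq_mul_sq_add_mul_sq_add_mul {a b f q : ℝ[X]} {c D d : ℕ}
    (hab : a ≠ 0 ∨ b ≠ 0) (hc : max a.natDegree b.natDegree = c)
    (hcop : IsCoprime f (a ^ 2 + b ^ 2)) (hf : f.natDegree + c ≤ D) (hDd : D ≤ d)
    (hq : q.natDegree ≤ d) :
    ∃ h₁ h₂ w : ℝ[X], h₁.natDegree + c ≤ d ∧ h₂.natDegree + c ≤ d ∧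
      (f * w).natDegree ≤ d + D ∧
      q ^ 2 = (a ^ 2 + b ^ 2) * h₁ ^ 2 + (a ^ 2 + b ^ 2) * h₂ ^ 2 + f * w := by
  obtain ⟨h₁, h₂, r₁, r₂, hh₁, hh₂, hr₁, hr₂, hre, him⟩ :=
    exists_eq_mul_sub_mul_add_mul_of_isCoprime_sq_add_sq hab hc hcop hf hDd hq
  refine ⟨h₁, h₂, 2 * q * r₁ - f * (r₁ ^ 2 + r₂ ^ 2), hh₁, hh₂, ?_, ?_⟩
  · compute_degree
    omega
  · linear_combination (q - f * r₁ + a * h₁ - b * h₂) * hre + (a * h₂ + b * h₁ - f * r₂) * him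

end Complexify

theorem nonneg_map_sq_of_map_mul_eq_zero {L : ℝ[X] →ₗ[ℝ] ℝ} {a b : ℝ[X]} {c D d : ℕ}
    (hab : a ≠ 0 ∨ b ≠ 0) (hc : max a.natDegree b.natDegree = c) (hDd : D ≤ d)
    (hpos : ∀ h : ℝ[X], h.natDegree + c ≤ d → 0 ≤ L ((a ^ 2 + b ^ 2) * h ^ 2))
    (hnull : ∀ h : ℝ[X], h.natDegree + c ≤ d → L ((a ^ 2 + b ^ 2) * h ^ 2) = 0 →
      ∀ w : ℝ[X], w.natDegree ≤ d + c → L (h * w) = 0)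
    {f : ℝ[X]} (hf : f ≠ 0) (hfD : f.natDegree + c ≤ D)
    (hvan : ∀ w, (f * w).natDegree ≤ d + D → L (f * w) = 0) {q : ℝ[X]} (hq : q.natDegree ≤ d) :
    0 ≤ L (q ^ 2) := by
  induction hn : f.natDegree using Nat.strong_induction_on generalizing f with | _ n ih =>
  by_cases hcop : IsCoprime f (a ^ 2 + b ^ 2)
  · obtain ⟨h₁, h₂, w, hh₁, hh₂, hw, hsq⟩ :=
      exists_sq_eq_mul_sq_add_mul_sq_add_mul hab hc hcop hfD hDd hq
    rw [hsq, map_add, map_add, hvan w hw, add_zero]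
    exact add_nonneg (hpos h₁ hh₁) (hpos h₂ hh₂)
  obtain ⟨g, ⟨f', rfl⟩, hgs, hg⟩ : ∃ g, g ∣ f ∧ g ∣ a ^ 2 + b ^ 2 ∧ ¬IsUnit g := by
    simpa [← isRelPrime_iff_isCoprime, IsRelPrime] using hcop
  have hg₀ := left_ne_zero_of_mul hf
  have hf' := right_ne_zero_of_mul hf
  have hg_deg : g.natDegree ≠ 0 := fun h =>
    hg (isUnit_iff_degree_eq_zero.2 (by rw [degree_eq_natDegree hg₀, h]; rfl))
  have hs : (a ^ 2 + b ^ 2).natDegree ≤ 2 * c := by compute_degree; omega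
  rw [natDegree_mul hg₀ hf'] at hn hfD
  exact ih _ (by omega) hf' (by omega)
    (fun w hw => map_mul_eq_zero_of_map_mul_mul_eq_zero hnull hs hDd hgs hf' (by omega) hvan hw) rfl

theorem nonneg_map_sq_of_secondOrder {L : ℝ[X] →ₗ[ℝ] ℝ} {φ : ℝ[X] → ℝ} (hφ : φ 0 = 0) {d : ℕ}
    {u₁ u₂ : ℝ[X]} (hu₁ : u₁.natDegree ≤ d) (hu₂ : u₂.natDegree ≤ d)
    (hgrad : ∀ v₁ v₂ : ℝ[X], v₁.natDegree ≤ d → v₂.natDegree ≤ d → L (u₁ * v₁ + u₂ * v₂) = 0)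
    (hhess : ∀ v₁ v₂ : ℝ[X], v₁.natDegree ≤ d → v₂.natDegree ≤ d →
      0 ≤ L (v₁ ^ 2 + v₂ ^ 2) + φ (u₁ * v₁ + u₂ * v₂))
    {q : ℝ[X]} (hq : q.natDegree ≤ d) : 0 ≤ L (q ^ 2) := by
  rcases eq_or_ne (gcd u₁ u₂) 0 with hg | hg
  · obtain ⟨rfl, rfl⟩ := (gcd_eq_zero_iff _ _).1 hg
    simpa [hφ] using hhess q 0 hq (by simp)
  obtain ⟨a, b, ha, hb, hunit⟩ := extract_gcd u₁ u₂
  generalize gcd u₁ u₂ = g at ha hb hg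
  subst ha hb
  have hab : IsCoprime a b := (gcd_isUnit_iff a b).1 hunit
  have hab₀ : a ≠ 0 ∨ b ≠ 0 := by
    by_contra! h
    exact not_isCoprime_zero_zero (h.1 ▸ h.2 ▸ hab)
  set c := max a.natDegree b.natDegree with hc
  have hD : g.natDegree + c ≤ d := natDegree_add_max_natDegree_le hg hab₀ hu₁ hu₂
  have hkernel : ∀ h : ℝ[X], h.natDegree + c ≤ d →
      (b * h).natDegree ≤ d ∧ (-(a * h)).natDegree ≤ d ∧
      g * a * (b * h) + g * b * -(a * h) = 0 ∧
      (b * h) ^ 2 + (-(a * h)) ^ 2 = (a ^ 2 + b ^ 2) * h ^ 2 :=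
    fun h hh => ⟨natDegree_mul_le.trans (by omega),
      by rw [natDegree_neg]; exact natDegree_mul_le.trans (by omega), by ring, by ring⟩
  refine nonneg_map_sq_of_map_mul_eq_zero hab₀ hc.symm hD (fun h hh => ?_)
    (fun h hh hnull w hw => ?_) hg le_rfl (fun w hw => ?_) hq
  · obtain ⟨hk₁, hk₂, hk, hsq⟩ := hkernel h hh
    have := hhess _ _ hk₁ hk₂
    rwa [hk, hφ, add_zero, hsq] at this
  · obtain ⟨hk₁, hk₂, hk, hsq⟩ := hkernel h hh
    obtain ⟨v₁, v₂, hv₁, hv₂, rfl⟩ := exists_mul_add_mul_eq_of_natDegree_le hab.symm.neg_right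
      (w := w) (n := d) (by rw [natDegree_neg]; omega) (by rw [natDegree_neg]; omega)
    rw [← hsq] at hnull
    convert map_mul_add_mul_eq_zero_of_map_sq_add_sq_eq_zero hhess hk₁ hk₂ hk hnull hv₁ hv₂
      using 2
    ring
  · rcases eq_or_ne w 0 with rfl | hw₀
    · simp
    rw [natDegree_mul hg hw₀] at hw
    obtain ⟨v₁, v₂, hv₁, hv₂, rfl⟩ :=
      exists_mul_add_mul_eq_of_natDegree_le hab (w := w) (n := d) (by omega) (by omega)
    convert hgrad v₁ v₂ hv₁ hv₂ using 2
    ring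

section Homogenize

variable {R : Type*} [CommSemiring R]

lemma natDegree_aeval_X_one_le {p : MvPolynomial (Fin 2) R} {n : ℕ} (hp : p.IsHomogeneous n) :
    (MvPolynomial.aeval ![(X : R[X]), 1] p).natDegree ≤ n := by
  rw [p.as_sum, map_sum]
  refine natDegree_sum_le_of_forall_le _ _ fun m hm => ?_
  calc (MvPolynomial.aeval ![X, 1] (MvPolynomial.monomial m (p.coeff m))).natDegree
      = (C (p.coeff m) * X ^ m 0).natDegree := by
        simp [MvPolynomial.aeval_monomial, Finsupp.prod_fintype]
    _ ≤ m 0 := natDegree_C_mul_X_pow_le _ _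
    _ ≤ n := by
        rw [← hp (MvPolynomial.mem_support_iff.1 hm)]
        simp [Finsupp.weight_apply, Finsupp.sum_fintype]

lemma homogenize_aeval_X_one_mul {p : MvPolynomial (Fin 2) R} {q : R[X]} {m n : ℕ}
    (hp : p.IsHomogeneous m) (hq : q.natDegree ≤ n) :
    (MvPolynomial.aeval ![(X : R[X]), 1] p * q).homogenize (m + n) = p * q.homogenize n :=
  homogenize_eq_of_isHomogeneous (hp.mul (isHomogeneous_homogenize q)) (by simp [hq])

end Homogenize

end Polynomial

namespace MvPolynomial

theorem nonneg_map_sq_of_secondOrder {ℓ : MvPolynomial (Fin 2) ℝ →ₗ[ℝ] ℝ}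
    {φ : MvPolynomial (Fin 2) ℝ → ℝ} (hφ : φ 0 = 0) {d : ℕ} {u₁ u₂ : MvPolynomial (Fin 2) ℝ}
    (hu₁ : u₁.IsHomogeneous d) (hu₂ : u₂.IsHomogeneous d)
    (hgrad : ∀ v₁ v₂ : MvPolynomial (Fin 2) ℝ, v₁.IsHomogeneous d → v₂.IsHomogeneous d →
      ℓ (u₁ * v₁ + u₂ * v₂) = 0)
    (hhess : ∀ v₁ v₂ : MvPolynomial (Fin 2) ℝ, v₁.IsHomogeneous d → v₂.IsHomogeneous d →
      0 ≤ ℓ (v₁ ^ 2 + v₂ ^ 2) + φ (u₁ * v₁ + u₂ * v₂))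
    {q : MvPolynomial (Fin 2) ℝ} (hq : q.IsHomogeneous d) : 0 ≤ ℓ (q ^ 2) := by
  have hmul {w : MvPolynomial (Fin 2) ℝ} {v : Polynomial ℝ} (hw : w.IsHomogeneous d)
      (hv : v.natDegree ≤ d) :
      (aeval ![Polynomial.X, 1] w * v).homogenize (2 * d) = w * v.homogenize d :=
    two_mul d ▸ Polynomial.homogenize_aeval_X_one_mul hw hv
  have hpow {v : Polynomial ℝ} (hv : v.natDegree ≤ d) :
      (v ^ 2).homogenize (2 * d) = v.homogenize d ^ 2 := by
    rw [pow_two, pow_two, two_mul, Polynomial.homogenize_mul _ _ hv hv]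
  have hq' := Polynomial.natDegree_aeval_X_one_le hq
  have h := Polynomial.nonneg_map_sq_of_secondOrder (L := ℓ ∘ₗ Polynomial.homogenizeLM (2 * d))
    (φ := fun w => φ (w.homogenize (2 * d))) (by simpa using hφ)
    (Polynomial.natDegree_aeval_X_one_le hu₁) (Polynomial.natDegree_aeval_X_one_le hu₂)
    (fun v₁ v₂ hv₁ hv₂ => ?_) (fun v₁ v₂ hv₁ hv₂ => ?_) hq'
  · rwa [LinearMap.comp_apply, Polynomial.homogenizeLM_apply, hpow hq',
      Polynomial.homogenize_eq_of_isHomogeneous hq rfl] at h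
  · rw [LinearMap.comp_apply, Polynomial.homogenizeLM_apply, Polynomial.homogenize_add,
      hmul hu₁ hv₁, hmul hu₂ hv₂]
    exact hgrad _ _ (Polynomial.isHomogeneous_homogenize v₁)
      (Polynomial.isHomogeneous_homogenize v₂)
  · rw [LinearMap.comp_apply, Polynomial.homogenizeLM_apply, Polynomial.homogenize_add, hpow hv₁,
      hpow hv₂, Polynomial.homogenize_add, hmul hu₁ hv₁, hmul hu₂ hv₂]
    exact hhess _ _ (Polynomial.isHomogeneous_homogenize v₁)
      (Polynomial.isHomogeneous_homogenize v₂)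

end MvPolynomial

open MvPolynomial

/-- Sum of squares optimization: if there is a sum of squares `p` with `B(p) = b`, then any
second-order critical point of `f_B(u) = ‖B(σ(u)) − b‖²` satisfies `B(u₁² + u₂²) = b`. -/
theorem sos_optimization_no_spurious_socp
    (m d : ℕ)
    (B : MvPolynomial (Fin 2) ℝ →ₗ[ℝ] (Fin m → ℝ))
    (b : Fin m → ℝ)
    (hfeas : ∃ p : MvPolynomial (Fin 2) ℝ, p.IsHomogeneous (2 * d) ∧
      (∃ (N : ℕ) (t : Fin N → MvPolynomial (Fin 2) ℝ),
        (∀ i, (t i).IsHomogeneous d) ∧ p = ∑ i, (t i) ^ 2) ∧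
      B p = b)
    (u₁ u₂ : MvPolynomial (Fin 2) ℝ)
    (hu₁ : u₁.IsHomogeneous d) (hu₂ : u₂.IsHomogeneous d)
    (hgrad : ∀ v₁ v₂ : MvPolynomial (Fin 2) ℝ, v₁.IsHomogeneous d → v₂.IsHomogeneous d →
      ∑ i, B (u₁ * v₁ + u₂ * v₂) i * (B (u₁ ^ 2 + u₂ ^ 2) i - b i) = 0)
    (hhess : ∀ v₁ v₂ : MvPolynomial (Fin 2) ℝ, v₁.IsHomogeneous d → v₂.IsHomogeneous d →
      0 ≤ (∑ i, B (v₁ ^ 2 + v₂ ^ 2) i * (B (u₁ ^ 2 + u₂ ^ 2) i - b i))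
        + 2 * ∑ i, (B (u₁ * v₁ + u₂ * v₂) i) ^ 2) :
    B (u₁ ^ 2 + u₂ ^ 2) = b := by
  obtain ⟨p, -, ⟨N, t, ht, rfl⟩, rfl⟩ := hfeas
  set r := B (u₁ ^ 2 + u₂ ^ 2) - B (∑ i, t i ^ 2)
  have hsq {q : MvPolynomial (Fin 2) ℝ} (hq : q.IsHomogeneous d) : 0 ≤ B (q ^ 2) ⬝ᵥ r :=
    nonneg_map_sq_of_secondOrder (ℓ := (dotProductBilin ℝ ℝ).flip r ∘ₗ B)
      (φ := fun w => 2 * ∑ i, B w i ^ 2) (by simp) hu₁ hu₂ hgrad hhess hq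
  have hσ : B (u₁ ^ 2 + u₂ ^ 2) ⬝ᵥ r = 0 := by
    have h := hgrad u₁ u₂ hu₁ hu₂
    rwa [← pow_two, ← pow_two] at h
  have hp : 0 ≤ B (∑ i, t i ^ 2) ⬝ᵥ r := by
    rw [map_sum, sum_dotProduct]
    exact Finset.sum_nonneg fun i _ => hsq (ht i)
  have hr : r ⬝ᵥ r ≤ 0 := by
    rw [sub_dotProduct]
    linarith
  exact sub_eq_zero.1 (dotProduct_self_eq_zero.1 (le_antisymm hr (dotProduct_self_star_nonneg r)))
end
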